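/- arXiv:2012.11603 — 3 statements merged into one kernel-verified Lean document; each statement's English description precedes it below -/
import Mathlib

section
/- Fix M ∈ {2,3,4,6}, let h = h_M be the standard order-M rotation matrix, and let φ be a real number. Then the operation (z₁,r₁,j₁)·(z₂,r₂,j₂) = (z₁ + z₂ + (φ/2)(r₁ × h^{j₁} r₂) mod 1, r₁ + h^{j₁} r₂, j₁ + j₂) on the set (ℝ/ℤ) × ℤ² × ℤ/M is a group law with identity (0,0,0); moreover the subgroup {(z,0,0) : z ∈ ℝ/ℤ} is central, and the quotient by this subgroup is isomorphic to the semidirect product ℤ² ⋊ ℤ/M in which the generator of ℤ/M acts on ℤ² by h. -/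
open Matrix

noncomputable section

/-- The standard order-`M` rotation matrix on `ℤ²`, for `M ∈ {2,3,4,6}`. -/
def hRot (M : ℕ) : Matrix (Fin 2) (Fin 2) ℤ :=
  if M = 2 then !![-1, 0; 0, -1]
  else if M = 3 then !![0, 1; -1, -1]
  else if M = 4 then !![0, 1; -1, 0]
  else if M = 6 then !![0, 1; -1, 1]
  else 1

/-- The cross product `(x,y) × (x',y') = x y' − y x'` of integer vectors. -/
def crossZ (r r' : Fin 2 → ℤ) : ℤ := r 0 * r' 1 - r 1 * r' 0

/-- The underlying set `(ℝ/ℤ) × ℤ² × ℤ/M` of the magnetic space group. -/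
abbrev MagSp (M : ℕ) : Type := AddCircle (1 : ℝ) × (Fin 2 → ℤ) × ZMod M

/-- The magnetic space group operation
`(z₁,r₁,j₁)·(z₂,r₂,j₂) = (z₁ + z₂ + (φ/2)(r₁ × h^{j₁} r₂) mod 1, r₁ + h^{j₁} r₂, j₁ + j₂)`. -/
def magSpMul (M : ℕ) (φ : ℝ) (g₁ g₂ : MagSp M) : MagSp M :=
  (g₁.1 + g₂.1 +
      (↑(φ / 2 * ((crossZ g₁.2.1 ((hRot M ^ (g₁.2.2).val).mulVec g₂.2.1) : ℤ) : ℝ)) :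
        AddCircle (1 : ℝ)),
    g₁.2.1 + (hRot M ^ (g₁.2.2).val).mulVec g₂.2.1,
    g₁.2.2 + g₂.2.2)

/-!
The multiplication is the product of `ℤ² ⋊ ℤ/M` twisted by
`c(g₁, g₂) = (φ/2) (r₁ × h^{j₁} r₂) mod 1`. Since `h^M = 1`, `j ↦ h^j` is a homomorphism on `ℤ/M`,
and since `det h = 1`, every `h^j` preserves the cross product; together these make `c` a
2-cocycle, which is associativity. The cocycle vanishes as soon as one argument has `r = 0, j = 0`,
which gives the identity and centrality of the circle; for `g⁻¹ = (-z, -h^{-j} r, -j)` both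
`c(g, g⁻¹)` and `c(g⁻¹, g)` are cross products of a vector with its negative, hence `0`.
The quotient map is the projection to `(r, j)`.
-/

lemma pow_val_add_of_pow_eq_one {G : Type*} [Monoid G] {n : ℕ} [NeZero n] {x : G}
    (hx : x ^ n = 1) (a b : ZMod n) : x ^ (a + b).val = x ^ a.val * x ^ b.val := by
  rw [ZMod.val_add, ← pow_eq_pow_mod _ hx, pow_add]

-- Outside `{2, 3, 4, 6}` the matrix `hRot M` is the junk value `1`.
lemma hRot_pow_self (M : ℕ) : hRot M ^ M = 1 := by
  unfold hRot
  split_ifs <;> subst_vars <;> first | decide | exact one_pow M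

lemma hRot_pow_val_add (M : ℕ) (a b : ZMod M) :
    hRot M ^ (a + b).val = hRot M ^ a.val * hRot M ^ b.val := by
  rcases eq_or_ne M 0 with rfl | hM
  · simp [hRot]
  · have : NeZero M := ⟨hM⟩
    exact pow_val_add_of_pow_eq_one (hRot_pow_self M) a b

lemma det_hRot (M : ℕ) : (hRot M).det = 1 := by
  unfold hRot
  split_ifs <;> simp [det_fin_two_of]

@[simp]
lemma crossZ_self (r : Fin 2 → ℤ) : crossZ r r = 0 := by
  rw [crossZ, mul_comm, sub_self]

@[simp]
lemma crossZ_neg_left (r r' : Fin 2 → ℤ) : crossZ (-r) r' = -crossZ r r' := by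
  simp only [crossZ, Pi.neg_apply]
  ring

@[simp]
lemma crossZ_neg_right (r r' : Fin 2 → ℤ) : crossZ r (-r') = -crossZ r r' := by
  simp only [crossZ, Pi.neg_apply]
  ring

lemma crossZ_mulVec_mulVec (A : Matrix (Fin 2) (Fin 2) ℤ) (x y : Fin 2 → ℤ) :
    crossZ (A *ᵥ x) (A *ᵥ y) = A.det * crossZ x y := by
  simp only [crossZ, mulVec, dotProduct, Fin.sum_univ_two, det_fin_two]
  ring

/-- The 2-cocycle identity behind associativity. -/
lemma crossZ_cocycle {A : Matrix (Fin 2) (Fin 2) ℤ} (hA : A.det = 1) (r₁ r₂ s : Fin 2 → ℤ) :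
    crossZ r₁ (A *ᵥ r₂) + crossZ (r₁ + A *ᵥ r₂) (A *ᵥ s) =
      crossZ r₂ s + crossZ r₁ (A *ᵥ (r₂ + s)) := by
  have h := crossZ_mulVec_mulVec A r₂ s
  rw [hA, one_mul] at h
  rw [mulVec_add]
  simp only [crossZ, Pi.add_apply] at h ⊢
  linear_combination h

lemma coe_half_mul_intCast_add (φ : ℝ) (a b : ℤ) :
    ((φ / 2 * ((a + b : ℤ) : ℝ) : ℝ) : AddCircle (1 : ℝ)) =
      ((φ / 2 * (a : ℝ) : ℝ) : AddCircle (1 : ℝ)) + ((φ / 2 * (b : ℝ) : ℝ) : AddCircle (1 : ℝ)) := by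
  rw [Int.cast_add, mul_add, AddCircle.coe_add]

section MagSp

variable (M : ℕ) (φ : ℝ)

lemma magSpMul_assoc (g₁ g₂ g₃ : MagSp M) :
    magSpMul M φ (magSpMul M φ g₁ g₂) g₃ = magSpMul M φ g₁ (magSpMul M φ g₂ g₃) := by
  obtain ⟨z₁, r₁, j₁⟩ := g₁
  obtain ⟨z₂, r₂, j₂⟩ := g₂
  obtain ⟨z₃, r₃, j₃⟩ := g₃
  have hpow : hRot M ^ (j₁ + j₂).val *ᵥ r₃ = hRot M ^ j₁.val *ᵥ (hRot M ^ j₂.val *ᵥ r₃) := by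
    rw [hRot_pow_val_add, mulVec_mulVec]
  have hcocycle := congrArg (fun n : ℤ => ((φ / 2 * (n : ℝ) : ℝ) : AddCircle (1 : ℝ)))
    (crossZ_cocycle (A := hRot M ^ j₁.val) (by rw [det_pow, det_hRot, one_pow])
      r₁ r₂ (hRot M ^ j₂.val *ᵥ r₃))
  simp only [coe_half_mul_intCast_add] at hcocycle
  simp only [magSpMul, hpow, Prod.mk.injEq]
  refine ⟨?_, by rw [mulVec_add, add_assoc], add_assoc _ _ _⟩
  linear_combination (norm := abel) hcocycle

lemma zero_magSpMul (g : MagSp M) : magSpMul M φ (0, 0, 0) g = g := by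
  simp [magSpMul, crossZ]

lemma magSpMul_zero (g : MagSp M) : magSpMul M φ g (0, 0, 0) = g := by
  simp [magSpMul, crossZ]

def magSpInv (g : MagSp M) : MagSp M :=
  (-g.1, -(hRot M ^ (-g.2.2).val *ᵥ g.2.1), -g.2.2)

lemma magSpMul_magSpInv (g : MagSp M) : magSpMul M φ g (magSpInv M g) = (0, 0, 0) := by
  obtain ⟨z, r, j⟩ := g
  have hr : hRot M ^ j.val *ᵥ -(hRot M ^ (-j).val *ᵥ r) = -r := by
    rw [mulVec_neg, mulVec_mulVec, ← hRot_pow_val_add, add_neg_cancel, ZMod.val_zero, pow_zero,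
      one_mulVec]
  simp only [magSpMul, magSpInv, hr, crossZ_neg_right, crossZ_self, neg_zero, Int.cast_zero,
    mul_zero, AddCircle.coe_zero, add_neg_cancel, add_zero]

lemma magSpInv_magSpMul (g : MagSp M) : magSpMul M φ (magSpInv M g) g = (0, 0, 0) := by
  simp only [magSpMul, magSpInv, crossZ_neg_left, crossZ_self, neg_zero, Int.cast_zero,
    mul_zero, AddCircle.coe_zero, neg_add_cancel, add_zero]

lemma magSpMul_central (z : AddCircle (1 : ℝ)) (g : MagSp M) :
    magSpMul M φ (z, 0, 0) g = magSpMul M φ g (z, 0, 0) := by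
  simp [magSpMul, crossZ, add_comm]

end MagSp

theorem magnetic_space_group_is_central_extension_general
    (M : ℕ) (φ : ℝ) :
    (∀ g₁ g₂ g₃ : MagSp M,
      magSpMul M φ (magSpMul M φ g₁ g₂) g₃ = magSpMul M φ g₁ (magSpMul M φ g₂ g₃)) ∧
    (∀ g : MagSp M, magSpMul M φ (0, 0, 0) g = g) ∧
    (∀ g : MagSp M, magSpMul M φ g (0, 0, 0) = g) ∧
    (∀ g : MagSp M, ∃ g' : MagSp M,
      magSpMul M φ g g' = (0, 0, 0) ∧ magSpMul M φ g' g = (0, 0, 0)) ∧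
    (∀ (z : AddCircle (1 : ℝ)) (g : MagSp M),
      magSpMul M φ (z, 0, 0) g = magSpMul M φ g (z, 0, 0)) ∧
    (∃ π : MagSp M → (Fin 2 → ℤ) × ZMod M,
      (∀ g₁ g₂ : MagSp M,
        π (magSpMul M φ g₁ g₂) =
          ((π g₁).1 + (hRot M ^ ((π g₁).2).val).mulVec (π g₂).1, (π g₁).2 + (π g₂).2)) ∧
      Function.Surjective π ∧
      (∀ g : MagSp M, π g = (0, 0) ↔ ∃ z : AddCircle (1 : ℝ), g = (z, 0, 0))) := by
  refine ⟨magSpMul_assoc M φ, zero_magSpMul M φ, magSpMul_zero M φ,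
    fun g => ⟨magSpInv M g, magSpMul_magSpInv M φ g, magSpInv_magSpMul M φ g⟩,
    magSpMul_central M φ, Prod.snd, fun _ _ => rfl, Prod.snd_surjective, fun g => ?_⟩
  exact ⟨fun h => ⟨g.1, Prod.ext rfl h⟩, by rintro ⟨z, rfl⟩; rfl⟩

/-- The operation `magSpMul` is a group law on `(ℝ/ℤ) × ℤ² × ℤ/M` with identity `(0,0,0)`;
the subgroup `{(z,0,0)}` is central, and the quotient by it is isomorphic to the semidirect
product `ℤ² ⋊ ℤ/M` in which the generator of `ℤ/M` acts by `hRot M`. -/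
theorem magnetic_space_group_is_central_extension
    (M : ℕ) (hM : M ∈ ({2, 3, 4, 6} : Set ℕ)) (φ : ℝ) :
    (∀ g₁ g₂ g₃ : MagSp M,
      magSpMul M φ (magSpMul M φ g₁ g₂) g₃ = magSpMul M φ g₁ (magSpMul M φ g₂ g₃)) ∧
    (∀ g : MagSp M, magSpMul M φ (0, 0, 0) g = g) ∧
    (∀ g : MagSp M, magSpMul M φ g (0, 0, 0) = g) ∧
    (∀ g : MagSp M, ∃ g' : MagSp M,
      magSpMul M φ g g' = (0, 0, 0) ∧ magSpMul M φ g' g = (0, 0, 0)) ∧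
    (∀ (z : AddCircle (1 : ℝ)) (g : MagSp M),
      magSpMul M φ (z, 0, 0) g = magSpMul M φ g (z, 0, 0)) ∧
    (∃ π : MagSp M → (Fin 2 → ℤ) × ZMod M,
      (∀ g₁ g₂ : MagSp M,
        π (magSpMul M φ g₁ g₂) =
          ((π g₁).1 + (hRot M ^ ((π g₁).2).val).mulVec (π g₂).1, (π g₁).2 + (π g₂).2)) ∧
      Function.Surjective π ∧
      (∀ g : MagSp M, π g = (0, 0) ↔ ∃ z : AddCircle (1 : ℝ), g = (z, 0, 0))) :=
  magnetic_space_group_is_central_extension_general M φ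
end
end

section
/- Fix M ∈ {2,3,4,6}, h = h_M, a real number φ, and let G = U(1)⋉_φ(ℤ²⋊ℤ_M) be the magnetic space group; let A be a finite abelian group (written additively). Then a function χ : G → A is a group homomorphism if and only if there exist a group homomorphism τ : ℤ² → A with τ ∘ h = τ and an element a ∈ A with M·a = 0 such that χ(z,r,j) = τ(r) + j·a for all (z,r,j) ∈ G (with representative j ∈ {0,…,M−1}; the expression j·a is well defined since M·a = 0). In particular, every homomorphism G → A vanishes on the central U(1) subgroup. -/
open Matrix

noncomputable section

/-!
On the central circle a homomorphism `χ` restricts to a homomorphism from the divisible group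
`ℝ/ℤ` to the finite group `A`, hence vanishes. So `χ` ignores the `U(1)` coordinate, and with it
the cocycle `φ/2 (r × r')`: it is additive on translations (giving `τ`) and on rotations
(giving `j ↦ j • χ(0,0,1)`), and `(0,r,0)(0,0,j) = (0,r,j)` splits `χ(z,r,j) = τ r + χ(0,0,j)`.
Evaluating `χ` on `(0,0,1)(0,r,0) = (0,h r,1)` then gives `τ ∘ h = τ`.
-/

lemma AddMonoidHom.apply_eq_zero_of_divisibleBy {G A : Type*} [AddGroup G] [DivisibleBy G ℤ]
    [AddGroup A] [Finite A] (f : G →+ A) (x : G) : f x = 0 := by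
  have hcard : ((Nat.card A : ℕ) : ℤ) ≠ 0 := by exact_mod_cast Nat.card_pos.ne'
  rw [← DivisibleBy.div_cancel x hcard, map_zsmul, natCast_zsmul, card_nsmul_eq_zero']

lemma ZMod.addMonoidHom_apply_eq_val_nsmul {M : ℕ} [NeZero M] {A : Type*} [AddCommGroup A]
    (ρ : ZMod M →+ A) (j : ZMod M) : ρ j = j.val • ρ 1 := by
  rw [← map_nsmul, nsmul_one, ZMod.natCast_zmod_val]

lemma val_add_nsmul_of_nsmul_eq_zero {M : ℕ} [NeZero M] {A : Type*} [AddCommGroup A] {a : A}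
    (ha : M • a = 0) (j j' : ZMod M) : (j + j').val • a = j.val • a + j'.val • a := by
  rw [ZMod.val_add, ← nsmul_eq_mod_nsmul _ ha, add_nsmul]

lemma apply_pow_mulVec_of_apply_mulVec {n R X : Type*} [Fintype n] [DecidableEq n] [CommRing R]
    {h : Matrix n n R} {f : (n → R) → X} (hf : ∀ v, f (h *ᵥ v) = f v) (k : ℕ) (v : n → R) :
    f ((h ^ k) *ᵥ v) = f v := by
  induction k with
  | zero => simp
  | succ k ih => rw [pow_succ', ← mulVec_mulVec, hf, ih]

section MagSp

variable {M : ℕ} {φ : ℝ}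

@[simp] lemma crossZ_zero_left (r : Fin 2 → ℤ) : crossZ 0 r = 0 := by simp [crossZ]

@[simp] lemma crossZ_zero_right (r : Fin 2 → ℤ) : crossZ r 0 = 0 := by simp [crossZ]

lemma magSpMul_central_left (z z' : AddCircle (1 : ℝ)) (r : Fin 2 → ℤ) (j : ZMod M) :
    magSpMul M φ (z, 0, 0) (z', r, j) = (z + z', r, j) := by
  simp [magSpMul]

lemma magSpMul_translations (z z' : AddCircle (1 : ℝ)) (r r' : Fin 2 → ℤ) :
    magSpMul M φ (z, r, 0) (z', r', 0) =
      (z + z' + ↑(φ / 2 * (crossZ r r' : ℝ)), r + r', (0 : ZMod M)) := by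
  simp [magSpMul]

lemma magSpMul_translation_rotation (r : Fin 2 → ℤ) (j : ZMod M) :
    magSpMul M φ (0, r, 0) (0, 0, j) = (0, r, j) := by
  simp [magSpMul]

lemma magSpMul_rotations (j j' : ZMod M) :
    magSpMul M φ (0, 0, j) (0, 0, j') = (0, 0, j + j') := by
  simp [magSpMul]

lemma magSpMul_rotation_translation (r : Fin 2 → ℤ) (j : ZMod M) :
    magSpMul M φ (0, 0, j) (0, r, 0) = (0, (hRot M ^ j.val) *ᵥ r, j) := by
  simp [magSpMul]

variable {A : Type*} [AddCommGroup A]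

def IsMagSpHom (M : ℕ) (φ : ℝ) (χ : MagSp M → A) : Prop :=
  ∀ g₁ g₂ : MagSp M, χ (magSpMul M φ g₁ g₂) = χ g₁ + χ g₂

lemma isMagSpHom_of_invariant [NeZero M] (τ : (Fin 2 → ℤ) →+ A) {a : A}
    (hτ : ∀ r, τ (hRot M *ᵥ r) = τ r) (ha : M • a = 0) :
    IsMagSpHom M φ fun g : MagSp M => τ g.2.1 + g.2.2.val • a := by
  rintro ⟨z₁, r₁, j₁⟩ ⟨z₂, r₂, j₂⟩
  simp only [magSpMul, map_add, apply_pow_mulVec_of_apply_mulVec hτ,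
    val_add_nsmul_of_nsmul_eq_zero ha]
  abel

namespace IsMagSpHom

variable {χ : MagSp M → A}

def centralHom (hχ : IsMagSpHom M φ χ) : AddCircle (1 : ℝ) →+ A :=
  AddMonoidHom.mk' (fun z => χ (z, 0, 0)) fun z z' => by
    rw [← hχ, magSpMul_central_left]

lemma apply_central_eq_zero [Finite A] (hχ : IsMagSpHom M φ χ) (z : AddCircle (1 : ℝ)) :
    χ (z, 0, 0) = 0 :=
  hχ.centralHom.apply_eq_zero_of_divisibleBy z

lemma apply_eq_apply_zero_fst [Finite A] (hχ : IsMagSpHom M φ χ) (z : AddCircle (1 : ℝ))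
    (r : Fin 2 → ℤ) (j : ZMod M) : χ (z, r, j) = χ (0, r, j) := by
  have hprod := hχ (z, 0, 0) (0, r, j)
  rwa [magSpMul_central_left, add_zero, hχ.apply_central_eq_zero, zero_add] at hprod

def translationHom [Finite A] (hχ : IsMagSpHom M φ χ) : (Fin 2 → ℤ) →+ A :=
  AddMonoidHom.mk' (fun r => χ (0, r, 0)) fun r r' => by
    rw [← hχ, magSpMul_translations]
    exact (hχ.apply_eq_apply_zero_fst _ _ _).symm

def rotationHom (hχ : IsMagSpHom M φ χ) : ZMod M →+ A :=
  AddMonoidHom.mk' (fun j => χ (0, 0, j)) fun j j' => by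
    rw [← hχ, magSpMul_rotations]

lemma apply_eq_translationHom_add_rotationHom [Finite A] (hχ : IsMagSpHom M φ χ)
    (g : MagSp M) : χ g = hχ.translationHom g.2.1 + hχ.rotationHom g.2.2 := by
  obtain ⟨z, r, j⟩ := g
  rw [hχ.apply_eq_apply_zero_fst, ← magSpMul_translation_rotation (φ := φ), hχ]
  rfl

lemma translationHom_hRot_mulVec [Finite A] [Fact (1 < M)] (hχ : IsMagSpHom M φ χ)
    (r : Fin 2 → ℤ) : hχ.translationHom (hRot M *ᵥ r) = hχ.translationHom r := by
  have hprod := hχ (0, 0, 1) (0, r, 0)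
  rw [magSpMul_rotation_translation, ZMod.val_one, pow_one,
    hχ.apply_eq_translationHom_add_rotationHom] at hprod
  exact add_right_cancel (hprod.trans (add_comm _ _))

end IsMagSpHom

end MagSp

/-- A function `χ` from the magnetic space group to a finite abelian group `A` is a
homomorphism iff `χ(z,r,j) = τ(r) + j·a` for an `h`-invariant homomorphism
`τ : ℤ² → A` and an `M`-torsion element `a ∈ A`; in particular every homomorphism
vanishes on the central `U(1)`. -/
theorem magnetic_space_group_homomorphisms (M : ℕ) (hM : M ∈ ({2, 3, 4, 6} : Set ℕ)) (φ : ℝ)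
    {A : Type*} [AddCommGroup A] [Finite A] (χ : MagSp M → A) :
    ((∀ g₁ g₂ : MagSp M, χ (magSpMul M φ g₁ g₂) = χ g₁ + χ g₂) ↔
      ∃ (τ : (Fin 2 → ℤ) →+ A) (a : A),
        (∀ r : Fin 2 → ℤ, τ ((hRot M).mulVec r) = τ r) ∧ M • a = 0 ∧
          ∀ g : MagSp M, χ g = τ g.2.1 + (g.2.2).val • a) ∧
    ((∀ g₁ g₂ : MagSp M, χ (magSpMul M φ g₁ g₂) = χ g₁ + χ g₂) →
      ∀ z : AddCircle (1 : ℝ), χ (z, 0, 0) = 0) := by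
  have : Fact (1 < M) := ⟨by rcases hM with rfl | rfl | rfl | rfl <;> norm_num⟩
  refine ⟨⟨fun (hχ : IsMagSpHom M φ χ) => ?_, ?_⟩, IsMagSpHom.apply_central_eq_zero⟩
  · refine ⟨hχ.translationHom, hχ.rotationHom 1, hχ.translationHom_hRot_mulVec, ?_,
      fun g => ?_⟩
    · rw [← map_nsmul, nsmul_one, ZMod.natCast_self, map_zero]
    · rw [hχ.apply_eq_translationHom_add_rotationHom, ZMod.addMonoidHom_apply_eq_val_nsmul]
  · rintro ⟨τ, a, hτ, ha, hχ⟩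
    rw [funext hχ]
    exact isMagSpHom_of_invariant τ hτ ha
end
end

section
/- Let N be an even positive integer, M ≥ 1 an integer, and q ∈ ℤ; set d = gcd(M,N). Then the set {exp(2πi·qu/N)·exp(iπ·M·u²/N) : u ∈ ℤ with N dividing M·u} is a finite cyclic subgroup of the circle group of unit complex numbers, of order 2d / gcd(2d, 2q + MN/d). -/
/-!
Writing `d = gcd(M, N)` and `N = d n`, the condition `N ∣ M u` says exactly `u = n v`. For such `u`
the phase is `ζ ^ (2 q v + M n v²)` with `ζ = exp(2πi / 2d)` a primitive `2d`-th root of unity, and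
since `d ∣ M n` and `v² - v` is even this equals `(ζ ^ (2q + MN/d)) ^ v`. The phases are therefore
the powers of `ζ ^ (2q + MN/d)`, a primitive root of unity of order `2d / gcd(2d, 2q + MN/d)`.
-/

open Complex Real

theorem IsPrimitiveRoot.zpow_div_gcd {G : Type*} [DivisionCommMonoid G] {ζ : G} {n : ℕ}
    (h : IsPrimitiveRoot ζ n) (hn : n ≠ 0) (a : ℤ) :
    IsPrimitiveRoot (ζ ^ a) (n / Int.gcd n a) := by
  have hg : 0 < Int.gcd n a := Int.gcd_pos_of_ne_zero_left a (by exact_mod_cast hn)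
  have hζg : IsPrimitiveRoot (ζ ^ Int.gcd n a) (n / Int.gcd n a) :=
    h.pow_of_dvd hg.ne' (by exact_mod_cast Int.gcd_dvd_left n a)
  have hcop := Int.gcd_div_gcd_div_gcd hg
  obtain ⟨b, hb⟩ := Int.gcd_dvd_right (n : ℤ) a
  generalize Int.gcd n a = g at *
  subst hb
  rw [Int.gcd_comm, ← Int.natCast_div, Int.mul_ediv_cancel_left b (by exact_mod_cast hg.ne')]
    at hcop
  rw [zpow_mul, zpow_natCast]
  exact hζg.zpow_of_gcd_eq_one b hcop

theorem IsPrimitiveRoot.setOf_pow_eq_one {K : Type*} [Field K] {ξ : K} {n : ℕ}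
    (h : IsPrimitiveRoot ξ n) (hn : n ≠ 0) :
    {z : K | z ^ n = 1} = Set.range (ξ ^ · : ℤ → K) := by
  have : NeZero n := ⟨hn⟩
  ext z
  constructor
  · intro hz
    obtain ⟨i, -, rfl⟩ := h.eq_pow_of_pow_eq_one hz
    exact ⟨i, zpow_natCast ξ i⟩
  · rintro ⟨v, rfl⟩
    rw [Set.mem_ofPred_eq, ← zpow_natCast, ← zpow_mul, mul_comm, zpow_mul, h.zpow_eq_one,
      one_zpow]

theorem zpow_eq_zpow_of_dvd_sub {G₀ : Type*} [GroupWithZero G₀] {ζ : G₀} {n : ℕ}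
    (hζ : ζ ^ n = 1) (hn : n ≠ 0) {a b : ℤ} (hab : (n : ℤ) ∣ a - b) : ζ ^ a = ζ ^ b := by
  have hζ0 : ζ ≠ 0 := by
    rintro rfl
    simp [zero_pow hn] at hζ
  obtain ⟨k, hk⟩ := hab
  rw [show a = b + n * k by omega, zpow_add₀ hζ0, zpow_mul, zpow_natCast, hζ, one_zpow, mul_one]

theorem Int.natCast_dvd_mul_iff_div_gcd_dvd {N : ℕ} (M : ℕ) (hN : N ≠ 0) (u : ℤ) :
    (N : ℤ) ∣ M * u ↔ ((N / Nat.gcd M N : ℕ) : ℤ) ∣ u := by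
  have hd : 0 < Nat.gcd M N := Nat.gcd_pos_of_pos_right M (Nat.pos_of_ne_zero hN)
  set d := Nat.gcd M N
  have hcop : IsCoprime ((N / d : ℕ) : ℤ) ((M / d : ℕ) : ℤ) :=
    Nat.isCoprime_iff_coprime.mpr (Nat.coprime_div_gcd_div_gcd hd).symm
  have key : ((d * (N / d) : ℕ) : ℤ) ∣ ((d * (M / d) : ℕ) : ℤ) * u ↔ ((N / d : ℕ) : ℤ) ∣ u := by
    rw [Nat.cast_mul, Nat.cast_mul, mul_assoc, mul_dvd_mul_iff_left (by exact_mod_cast hd.ne')]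
    exact ⟨hcop.dvd_of_dvd_mul_left, fun h ↦ h.mul_left _⟩
  rwa [Nat.mul_div_cancel' (Nat.gcd_dvd_right M N), Nat.mul_div_cancel' (Nat.gcd_dvd_left M N)]
    at key

theorem setOf_exists_dvd_and_eq_eq_range {α : Type*} (f : ℤ → α) (n : ℤ) :
    {z | ∃ u, n ∣ u ∧ z = f u} = Set.range (fun v ↦ f (n * v)) := by
  ext z
  constructor
  · rintro ⟨u, ⟨v, rfl⟩, rfl⟩
    exact ⟨v, rfl⟩
  · rintro ⟨v, rfl⟩
    exact ⟨_, dvd_mul_right n v, rfl⟩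

/-- The relabeling phase `M_{q,u} θ_u^M` of the anyon `u` in the `1/N` Laughlin theory. -/
noncomputable def relabelingPhase (N M : ℕ) (q u : ℤ) : ℂ :=
  exp (2 * π * I * q * u / N) * exp (π * I * M * u ^ 2 / N)

theorem relabelingPhase_mul_eq_zpow {N d n M : ℕ} (hdn : d * n = N) (hd : d ≠ 0) (hn : n ≠ 0)
    (hdM : d ∣ M) (q v : ℤ) :
    relabelingPhase N M q (n * v) = exp (2 * π * I / (2 * d)) ^ ((2 * q + M * n) * v) := by
  subst hdn
  have hphase : relabelingPhase (d * n) M q (n * v) =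
      exp (2 * π * I / (2 * d)) ^ (2 * q * v + M * n * v ^ 2) := by
    rw [relabelingPhase, ← exp_int_mul, ← Complex.exp_add]
    congr 1
    push_cast
    field_simp
  have hζ : exp (2 * π * I / (2 * d)) ^ (2 * d) = 1 := by
    exact_mod_cast (isPrimitiveRoot_exp (2 * d) (by positivity)).pow_eq_one
  rw [hphase]
  refine zpow_eq_zpow_of_dvd_sub hζ (by positivity) ?_
  obtain ⟨m, rfl⟩ := hdM
  obtain ⟨w, hw⟩ := Int.even_mul_pred_self v
  exact ⟨m * n * w, by push_cast; linear_combination (d * m * n : ℤ) * hw⟩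

theorem laughlin_relabeling_phases_general (N : ℕ) (hN : 0 < N) (M : ℕ) (q : ℤ) :
    {z : ℂ | ∃ u : ℤ, (N : ℤ) ∣ (M : ℤ) * u ∧
        z = Complex.exp (2 * (Real.pi : ℂ) * Complex.I * (q : ℂ) * (u : ℂ) / (N : ℂ)) *
          Complex.exp ((Real.pi : ℂ) * Complex.I * (M : ℂ) * (u : ℂ) ^ 2 / (N : ℂ))} =
      {z : ℂ | z ^ (2 * Nat.gcd M N /
        Int.gcd (2 * (Nat.gcd M N : ℤ)) (2 * q + ((M * N / Nat.gcd M N : ℕ) : ℤ))) = 1} := by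
  change {z | ∃ u : ℤ, (N : ℤ) ∣ M * u ∧ z = relabelingPhase N M q u} = _
  rw [Nat.mul_div_assoc M (Nat.gcd_dvd_right M N), Nat.cast_mul]
  simp_rw [Int.natCast_dvd_mul_iff_div_gcd_dvd M hN.ne', setOf_exists_dvd_and_eq_eq_range]
  set d := Nat.gcd M N
  set n := N / d
  have hd : d ≠ 0 := (Nat.gcd_pos_of_pos_right M hN).ne'
  have hdn : d * n = N := Nat.mul_div_cancel' (Nat.gcd_dvd_right M N)
  have hn : n ≠ 0 := fun h ↦ by rw [h, mul_zero] at hdn; omega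
  set a : ℤ := 2 * q + M * n
  have hζ : IsPrimitiveRoot (exp (2 * π * I / (2 * d))) (2 * d) := by
    exact_mod_cast isPrimitiveRoot_exp (2 * d) (by positivity)
  have hP := hζ.zpow_div_gcd (by positivity) a
  rw [Nat.cast_mul, Nat.cast_ofNat] at hP
  have hg : Int.gcd (2 * (d : ℤ)) a ∣ 2 * d := by
    exact_mod_cast Int.gcd_dvd_left (2 * (d : ℤ)) a
  rw [hP.setOf_pow_eq_one (Nat.div_pos (Nat.le_of_dvd (by positivity) hg)
    (Int.gcd_pos_of_ne_zero_left _ (by positivity))).ne']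
  simp_rw [relabelingPhase_mul_eq_zpow hdn hd hn (Nat.gcd_dvd_left M N), zpow_mul]
  rfl

/-- For the `1/N` Laughlin topological order (`N` even) with `ℤ_M` rotational symmetry
fractionalization class `q`, the set of relabeling phases
`{exp(2πi qu/N)·exp(iπ M u²/N) : u ∈ ℤ, N ∣ M u}` is exactly the group of `P`-th roots of
unity with `P = 2d / gcd(2d, 2q + MN/d)`, `d = gcd(M,N)`. -/
theorem laughlin_relabeling_phases (N : ℕ) (hN : 0 < N) (hNeven : Even N)
    (M : ℕ) (hM : 1 ≤ M) (q : ℤ) :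
    {z : ℂ | ∃ u : ℤ, (N : ℤ) ∣ (M : ℤ) * u ∧
        z = Complex.exp (2 * (Real.pi : ℂ) * Complex.I * (q : ℂ) * (u : ℂ) / (N : ℂ)) *
          Complex.exp ((Real.pi : ℂ) * Complex.I * (M : ℂ) * (u : ℂ) ^ 2 / (N : ℂ))} =
      {z : ℂ | z ^ (2 * Nat.gcd M N /
        Int.gcd (2 * (Nat.gcd M N : ℤ)) (2 * q + ((M * N / Nat.gcd M N : ℕ) : ℤ))) = 1} :=
  laughlin_relabeling_phases_general N hN M q
end
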